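/- For every Hermitian positive semidefinite matrix ρ ∈ ℂ^{m×m}, every s ∈ [0,T] and every t ≥ 0, one has Tr(e^{tA(s)} ρ e^{tA(s)†}) ≤ Tr(ρ). -/

import Mathlib

open Matrix Set
open scoped ComplexOrder

attribute [local instance] Matrix.normedAddCommGroup Matrix.normedSpace

/-- Trace norm: `‖X‖₁ = Tr √(XᴴX)`. -/
noncomputable def traceNorm {m : ℕ} (X : Matrix (Fin m) (Fin m) ℂ) : ℝ :=
  (((Matrix.posSemidef_conjTranspose_mul_self X).1.eigenvectorUnitary.1 *
      diagonal (((↑) : ℝ → ℂ) ∘ Real.sqrt ∘ (Matrix.posSemidef_conjTranspose_mul_self X).1.eigenvalues) *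
      (star (Matrix.posSemidef_conjTranspose_mul_self X).1.eigenvectorUnitary : Matrix (Fin m) (Fin m) ℂ)).trace).re

/-- `A(t) = -i H(t) - (1/2) ∑ₖ γₖ(t) Lₖᴴ Lₖ`. -/
noncomputable def Aop {m K : ℕ} (H : ℝ → Matrix (Fin m) (Fin m) ℂ)
    (L : Fin K → Matrix (Fin m) (Fin m) ℂ) (γ : Fin K → ℝ → ℝ) (t : ℝ) : Matrix (Fin m) (Fin m) ℂ :=
  (-Complex.I) • H t - (1 / 2 : ℂ) • ∑ k, (γ k t : ℂ) • ((L k)ᴴ * L k)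

/-! The generator is dissipative: `A + Aᴴ = -∑ₖ γₖ Lₖᴴ Lₖ ≤ 0`. Along `σᵤ = e^{uA} ρ e^{uA}ᴴ ⪰ 0`
the function `u ↦ Tr σᵤ` has derivative `Tr ((A + Aᴴ) σᵤ)`, which is `≤ 0` because the trace of a
product of two positive semidefinite matrices is nonnegative. So `Tr σᵤ` decreases from `Tr ρ`. -/

namespace Matrix

variable {n : Type*} [Fintype n]

open scoped MatrixOrder in
lemma PosSemidef.trace_mul_nonneg {𝕜 : Type*} [RCLike 𝕜] {A B : Matrix n n 𝕜}
    (hA : A.PosSemidef) (hB : B.PosSemidef) : 0 ≤ (A * B).trace := by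
  classical
  obtain ⟨X, rfl⟩ := CStarAlgebra.nonneg_iff_eq_star_mul_self.mp hA.nonneg
  rw [Matrix.mul_assoc, trace_mul_comm, Matrix.mul_assoc, ← Matrix.mul_assoc]
  exact (hB.mul_mul_conjTranspose_same X).trace_nonneg

variable [DecidableEq n]

lemma hasDerivAt_re_trace_exp_mul_mul_exp_conjTranspose (B ρ : Matrix n n ℂ) (u : ℝ) :
    HasDerivAt (fun v : ℝ => (trace (NormedSpace.exp (v • B) * ρ * NormedSpace.exp (v • Bᴴ))).re)
      (trace ((B + Bᴴ) * (NormedSpace.exp (u • B) * ρ * (NormedSpace.exp (u • B))ᴴ))).re u := by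
  have hE : (NormedSpace.exp (u • B))ᴴ = NormedSpace.exp (u • Bᴴ) := by
    rw [← exp_conjTranspose, conjTranspose_smul, star_trivial]
  -- Matrices carry no global normed-algebra structure; `exp` does not depend on the choice.
  let _ : NormedAddCommGroup (Matrix n n ℂ) := Matrix.linftyOpNormedAddCommGroup
  let _ : NormedSpace ℝ (Matrix n n ℂ) := Matrix.linftyOpNormedSpace
  let _ : NormedRing (Matrix n n ℂ) := Matrix.linftyOpNormedRing
  let _ : NormedAlgebra ℝ (Matrix n n ℂ) := Matrix.linftyOpNormedAlgebra
  have hexp : HasDerivAt (fun v : ℝ => NormedSpace.exp (v • B) * ρ * NormedSpace.exp (v • Bᴴ))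
      (B * NormedSpace.exp (u • B) * ρ * NormedSpace.exp (u • Bᴴ)
        + NormedSpace.exp (u • B) * ρ * (NormedSpace.exp (u • Bᴴ) * Bᴴ)) u :=
    ((hasDerivAt_exp_smul_const' B u).mul_const ρ).mul (hasDerivAt_exp_smul_const Bᴴ u)
  refine ((Complex.reCLM.comp (traceLinearMap n ℝ ℂ).toContinuousLinearMap).hasFDerivAt
    |>.comp_hasDerivAt u hexp).congr_deriv ?_
  show (trace (_ + _ : Matrix n n ℂ)).re = _
  rw [hE, add_mul, trace_add, trace_add, trace_mul_comm Bᴴ]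
  simp only [Matrix.mul_assoc]

lemma re_trace_exp_mul_mul_exp_conjTranspose_le {B ρ : Matrix n n ℂ} (hB : (-(B + Bᴴ)).PosSemidef)
    (hρ : ρ.PosSemidef) {t : ℝ} (ht : 0 ≤ t) :
    (trace (NormedSpace.exp (t • B) * ρ * NormedSpace.exp (t • Bᴴ))).re ≤ ρ.trace.re := by
  have hderiv := hasDerivAt_re_trace_exp_mul_mul_exp_conjTranspose B ρ
  have hanti : Antitone fun v : ℝ =>
      (trace (NormedSpace.exp (v • B) * ρ * NormedSpace.exp (v • Bᴴ))).re := by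
    refine antitone_of_deriv_nonpos (fun u => (hderiv u).differentiableAt) fun u => ?_
    have hσ := hρ.mul_mul_conjTranspose_same (NormedSpace.exp (u • B))
    rw [(hderiv u).deriv, ← neg_nonneg, ← Complex.neg_re, ← trace_neg, ← neg_mul]
    exact (Complex.nonneg_iff.mp (hB.trace_mul_nonneg hσ)).1
  simpa using hanti ht

end Matrix

lemma Aop_add_conjTranspose {m K : ℕ} {H : ℝ → Matrix (Fin m) (Fin m) ℂ} {s : ℝ}
    (hH : (H s).IsHermitian) (L : Fin K → Matrix (Fin m) (Fin m) ℂ) (γ : Fin K → ℝ → ℝ) :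
    Aop H L γ s + (Aop H L γ s)ᴴ = -∑ k, (γ k s : ℂ) • ((L k)ᴴ * L k) := by
  simp [Aop, conjTranspose_sum, hH.eq]
  module

lemma posSemidef_neg_Aop_add_conjTranspose {m K : ℕ} {H : ℝ → Matrix (Fin m) (Fin m) ℂ} {s : ℝ}
    (hH : (H s).IsHermitian) (L : Fin K → Matrix (Fin m) (Fin m) ℂ) {γ : Fin K → ℝ → ℝ}
    (hγ : ∀ k, 0 ≤ γ k s) : (-(Aop H L γ s + (Aop H L γ s)ᴴ)).PosSemidef := by
  rw [Aop_add_conjTranspose hH, neg_neg]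
  exact posSemidef_sum _ fun k _ =>
    (posSemidef_conjTranspose_mul_self (L k)).smul (Complex.zero_le_real.mpr (hγ k))

theorem stmt_5_general {m K : ℕ}
    (H : ℝ → Matrix (Fin m) (Fin m) ℂ) (hH : ∀ t, (H t).IsHermitian)
    (L : Fin K → Matrix (Fin m) (Fin m) ℂ)
    (γ : Fin K → ℝ → ℝ) (hγ : ∀ k t, 0 ≤ γ k t)
    (ρ : Matrix (Fin m) (Fin m) ℂ) (hρ : ρ.PosSemidef)
    (s : ℝ) (t : ℝ) (ht : 0 ≤ t) :
    (Matrix.trace (NormedSpace.exp (t • Aop H L γ s) * ρ *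
      NormedSpace.exp (t • (Aop H L γ s)ᴴ))).re ≤ (Matrix.trace ρ).re :=
  re_trace_exp_mul_mul_exp_conjTranspose_le
    (posSemidef_neg_Aop_add_conjTranspose (hH s) L fun k => hγ k s) hρ ht

theorem stmt_5 {m K : ℕ} (hm : 1 ≤ m) (hK : 1 ≤ K)
    (H : ℝ → Matrix (Fin m) (Fin m) ℂ) (hH : ∀ t, (H t).IsHermitian)
    (L : Fin K → Matrix (Fin m) (Fin m) ℂ)
    (γ : Fin K → ℝ → ℝ) (hγc : ∀ k, Continuous (γ k)) (hγ : ∀ k t, 0 ≤ γ k t)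
    (T : ℝ) (hT : 0 < T)
    (ρ : Matrix (Fin m) (Fin m) ℂ) (hρ : ρ.PosSemidef)
    (s : ℝ) (hs : s ∈ Set.Icc (0 : ℝ) T) (t : ℝ) (ht : 0 ≤ t) :
    (Matrix.trace (NormedSpace.exp (t • Aop H L γ s) * ρ *
      NormedSpace.exp (t • (Aop H L γ s)ᴴ))).re ≤ (Matrix.trace ρ).re :=
  stmt_5_general H hH L γ hγ ρ hρ s t ht
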